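/- Let n ≥ 3, let W be a 4-tensor on ℝⁿ satisfying W_{ijkl} = −W_{jikl} = −W_{ijlk}, W_{ijkl} = W_{klij}, the first Bianchi identity W_{ijkl} + W_{iklj} + W_{iljk} = 0, and Σ_i W_{ijil} = 0 for all j, l, and let B be a symmetric trace-free n×n real matrix (tr B = 0). Then ( Σ_{i,j,k,l} (W + (n/(2(n−2))) B⊼δ)_{ijkl} (B⊼B)_{ijkl} )² ≤ (8(n−2)/(n−1)) ( |W|² + (2n/(n−2)) |B|² ) |B|⁴, where |W|² := Σ_{i,j,k,l} W_{ijkl}² and |B|² := Σ_{i,j} B_{ij}². -/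

import Mathlib

open Finset

/-- The Kulkarni–Nomizu product of two `n × n` real matrices. -/
def KN {n : ℕ} (S T : Fin n → Fin n → ℝ) : Fin n → Fin n → Fin n → Fin n → ℝ :=
  fun i j k l => S i k * T j l + S j l * T i k - S i l * T j k - S j k * T i l

/-- The `n × n` identity matrix. -/
def delta (n : ℕ) : Fin n → Fin n → ℝ := fun i j => if i = j then 1 else 0

/-!
Write `R = B ⊼ B`, `Ric₀` for its trace-free Ricci contraction and `s = 2n/(n-2)`.
A tensor that is antisymmetric in both index pairs and Ricci-flat is orthogonal to every
`S ⊼ δ`; this applies to `W` and to the Weyl part of `R`, so `⟨W, R⟩ = ⟨W, weyl R⟩`, while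
`⟨B ⊼ δ, R⟩ = 4⟨Ric R, B⟩ = 4⟨Ric₀, B⟩` because `tr B = 0`. The left-hand side is thus the
weighted pairing `⟨W, weyl R⟩ + s⟨B, Ric₀⟩` of `(W, B)` with `(weyl R, Ric₀)`, and Cauchy–Schwarz
bounds its square by `(|W|² + s|B|²)(|weyl R|² + s|Ric₀|²)`. The orthogonal decomposition
`R = weyl R + (n-2)⁻¹ Ric₀ ⊼ δ + scal/(2n(n-1)) δ ⊼ δ` evaluates the second factor: the terms in
`|B²|²` cancel, leaving `8(n-2)/(n-1) |B|⁴`.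
-/

lemma add_sq_le_add_mul_add {p q a b c d : ℝ} (ha : 0 ≤ a) (hb : 0 ≤ b) (hc : 0 ≤ c)
    (hd : 0 ≤ d) (hp : p ^ 2 ≤ a * b) (hq : q ^ 2 ≤ c * d) :
    (p + q) ^ 2 ≤ (a + c) * (b + d) := by
  have hpq : p ^ 2 * q ^ 2 ≤ (a * b) * (c * d) := mul_le_mul hp hq (sq_nonneg q) (by positivity)
  nlinarith [sq_nonneg (a * d - c * b), mul_nonneg ha hd, mul_nonneg hc hb, sq_nonneg (p * q)]

section

variable {n : ℕ}

def dot2 (S T : Fin n → Fin n → ℝ) : ℝ := ∑ i, ∑ j, S i j * T i j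

def dot4 (R Q : Fin n → Fin n → Fin n → Fin n → ℝ) : ℝ :=
  ∑ i, ∑ j, ∑ k, ∑ l, R i j k l * Q i j k l

lemma dot2_comm (S T : Fin n → Fin n → ℝ) : dot2 S T = dot2 T S := by
  simp only [dot2, mul_comm]

@[simp] lemma dot2_sub_left (S S' T : Fin n → Fin n → ℝ) :
    dot2 (S - S') T = dot2 S T - dot2 S' T := by
  simp only [dot2, Pi.sub_apply, sub_mul, sum_sub_distrib]

@[simp] lemma dot2_smul_left (c : ℝ) (S T : Fin n → Fin n → ℝ) :
    dot2 (c • S) T = c * dot2 S T := by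
  simp only [dot2, Pi.smul_apply, smul_eq_mul, mul_assoc, mul_sum]

@[simp] lemma dot2_sub_right (S T T' : Fin n → Fin n → ℝ) :
    dot2 S (T - T') = dot2 S T - dot2 S T' := by
  rw [dot2_comm, dot2_sub_left, dot2_comm T, dot2_comm T']

@[simp] lemma dot2_smul_right (c : ℝ) (S T : Fin n → Fin n → ℝ) :
    dot2 S (c • T) = c * dot2 S T := by
  rw [dot2_comm, dot2_smul_left, dot2_comm]

lemma dot2_delta_right (S : Fin n → Fin n → ℝ) : dot2 S (delta n) = ∑ i, S i i := by
  simp [dot2, delta]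

lemma dot2_delta_delta : dot2 (delta n) (delta n) = n := by
  simp [dot2_delta_right, delta]

lemma dot4_comm (R Q : Fin n → Fin n → Fin n → Fin n → ℝ) : dot4 R Q = dot4 Q R := by
  simp only [dot4, mul_comm]

@[simp] lemma dot4_add_left (R R' Q : Fin n → Fin n → Fin n → Fin n → ℝ) :
    dot4 (R + R') Q = dot4 R Q + dot4 R' Q := by
  simp only [dot4, Pi.add_apply, add_mul, sum_add_distrib]

@[simp] lemma dot4_sub_left (R R' Q : Fin n → Fin n → Fin n → Fin n → ℝ) :
    dot4 (R - R') Q = dot4 R Q - dot4 R' Q := by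
  simp only [dot4, Pi.sub_apply, sub_mul, sum_sub_distrib]

@[simp] lemma dot4_smul_left (c : ℝ) (R Q : Fin n → Fin n → Fin n → Fin n → ℝ) :
    dot4 (c • R) Q = c * dot4 R Q := by
  simp only [dot4, Pi.smul_apply, smul_eq_mul, mul_assoc, mul_sum]

@[simp] lemma dot4_sub_right (R Q Q' : Fin n → Fin n → Fin n → Fin n → ℝ) :
    dot4 R (Q - Q') = dot4 R Q - dot4 R Q' := by
  rw [dot4_comm, dot4_sub_left, dot4_comm Q, dot4_comm Q']

@[simp] lemma dot4_smul_right (c : ℝ) (R Q : Fin n → Fin n → Fin n → Fin n → ℝ) :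
    dot4 R (c • Q) = c * dot4 R Q := by
  rw [dot4_comm, dot4_smul_left, dot4_comm]

lemma dot2_self_nonneg (S : Fin n → Fin n → ℝ) : 0 ≤ dot2 S S :=
  sum_nonneg fun _ _ => sum_nonneg fun _ _ => mul_self_nonneg _

lemma dot4_self_nonneg (R : Fin n → Fin n → Fin n → Fin n → ℝ) : 0 ≤ dot4 R R :=
  sum_nonneg fun _ _ => sum_nonneg fun _ _ => sum_nonneg fun _ _ => sum_nonneg fun _ _ =>
    mul_self_nonneg _

lemma dot2_sq_le (S T : Fin n → Fin n → ℝ) : dot2 S T ^ 2 ≤ dot2 S S * dot2 T T := by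
  simpa only [dot2, Fintype.sum_prod_type, sq] using
    sum_mul_sq_le_sq_mul_sq univ (fun p : Fin n × Fin n => S p.1 p.2) (fun p => T p.1 p.2)

lemma dot4_sq_le (R Q : Fin n → Fin n → Fin n → Fin n → ℝ) :
    dot4 R Q ^ 2 ≤ dot4 R R * dot4 Q Q := by
  simpa only [dot4, Fintype.sum_prod_type, sq] using
    sum_mul_sq_le_sq_mul_sq univ
      (fun p : Fin n × Fin n × Fin n × Fin n => R p.1 p.2.1 p.2.2.1 p.2.2.2)
      (fun p => Q p.1 p.2.1 p.2.2.1 p.2.2.2)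

lemma dot4_add_smul_dot2_sq_le {s : ℝ} (hs : 0 ≤ s) (R Q : Fin n → Fin n → Fin n → Fin n → ℝ)
    (S T : Fin n → Fin n → ℝ) :
    (dot4 R Q + s * dot2 S T) ^ 2 ≤
      (dot4 R R + s * dot2 S S) * (dot4 Q Q + s * dot2 T T) := by
  refine add_sq_le_add_mul_add (dot4_self_nonneg R) (dot4_self_nonneg Q)
    (mul_nonneg hs (dot2_self_nonneg S)) (mul_nonneg hs (dot2_self_nonneg T))
    (dot4_sq_le R Q) ?_
  calc (s * dot2 S T) ^ 2 = s ^ 2 * dot2 S T ^ 2 := by ring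
    _ ≤ s ^ 2 * (dot2 S S * dot2 T T) := by gcongr; exact dot2_sq_le S T
    _ = s * dot2 S S * (s * dot2 T T) := by ring

structure PairAntisymm (R : Fin n → Fin n → Fin n → Fin n → ℝ) : Prop where
  left : ∀ i j k l, R i j k l = -R j i k l
  right : ∀ i j k l, R i j k l = -R i j l k

lemma PairAntisymm.sub {R Q : Fin n → Fin n → Fin n → Fin n → ℝ} (hR : PairAntisymm R)
    (hQ : PairAntisymm Q) : PairAntisymm (R - Q) :=
  ⟨fun i j k l => by simp only [Pi.sub_apply, hR.left i j, hQ.left i j]; ring,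
   fun i j k l => by simp only [Pi.sub_apply, hR.right i j k, hQ.right i j k]; ring⟩

lemma PairAntisymm.smul {R : Fin n → Fin n → Fin n → Fin n → ℝ} (hR : PairAntisymm R)
    (c : ℝ) : PairAntisymm (c • R) :=
  ⟨fun i j k l => by simp only [Pi.smul_apply, smul_eq_mul, hR.left i j, mul_neg],
   fun i j k l => by simp only [Pi.smul_apply, smul_eq_mul, hR.right i j k, mul_neg]⟩

lemma pairAntisymm_KN (S T : Fin n → Fin n → ℝ) : PairAntisymm (KN S T) :=
  ⟨fun i j k l => by simp only [KN]; ring, fun i j k l => by simp only [KN]; ring⟩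

lemma dot4_KN {R : Fin n → Fin n → Fin n → Fin n → ℝ} (hR : PairAntisymm R)
    (S T : Fin n → Fin n → ℝ) :
    dot4 R (KN S T) = 4 * ∑ i, ∑ j, ∑ k, ∑ l, R i j k l * (S i k * T j l) := by
  have swap_ij : ∑ i, ∑ j, ∑ k, ∑ l, R i j k l * (S j l * T i k) =
      ∑ i, ∑ j, ∑ k, ∑ l, R i j k l * (S i k * T j l) := by
    rw [sum_comm]
    refine sum_congr rfl fun i _ => sum_congr rfl fun j _ => ?_
    rw [sum_comm]
    refine sum_congr rfl fun k _ => sum_congr rfl fun l _ => ?_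
    rw [hR.left j i l k, hR.right i j l k, neg_neg]
  have swap_kl : ∑ i, ∑ j, ∑ k, ∑ l, R i j k l * (S i l * T j k) =
      -∑ i, ∑ j, ∑ k, ∑ l, R i j k l * (S i k * T j l) := by
    simp only [← sum_neg_distrib]
    refine sum_congr rfl fun i _ => sum_congr rfl fun j _ => ?_
    rw [sum_comm]
    refine sum_congr rfl fun k _ => sum_congr rfl fun l _ => ?_
    rw [hR.right i j l k, neg_mul]
  have swap_both : ∑ i, ∑ j, ∑ k, ∑ l, R i j k l * (S j k * T i l) =
      -∑ i, ∑ j, ∑ k, ∑ l, R i j k l * (S i k * T j l) := by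
    rw [sum_comm]
    simp only [← sum_neg_distrib]
    refine sum_congr rfl fun i _ => sum_congr rfl fun j _ => ?_
    refine sum_congr rfl fun k _ => sum_congr rfl fun l _ => ?_
    rw [hR.left j i k l, neg_mul]
  simp only [dot4, KN, mul_add, mul_sub, sum_add_distrib, sum_sub_distrib]
  rw [swap_ij, swap_kl, swap_both]
  ring

def ricci (R : Fin n → Fin n → Fin n → Fin n → ℝ) : Fin n → Fin n → ℝ :=
  fun i k => ∑ j, R i j k j

def scal (R : Fin n → Fin n → Fin n → Fin n → ℝ) : ℝ := ∑ i, ricci R i i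

noncomputable def tracelessRicci (R : Fin n → Fin n → Fin n → Fin n → ℝ) :
    Fin n → Fin n → ℝ :=
  ricci R - (scal R / n) • delta n

/-- For `2 < n` and `R` antisymmetric in both index pairs, the component of `R` orthogonal to
every `S ⊼ δ`. -/
noncomputable def weylPart (R : Fin n → Fin n → Fin n → Fin n → ℝ) :
    Fin n → Fin n → Fin n → Fin n → ℝ :=
  R - ((n : ℝ) - 2)⁻¹ • KN (tracelessRicci R) (delta n)
    - (scal R / (2 * n * ((n : ℝ) - 1))) • KN (delta n) (delta n)

lemma dot4_KN_delta {R : Fin n → Fin n → Fin n → Fin n → ℝ} (hR : PairAntisymm R)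
    (S : Fin n → Fin n → ℝ) : dot4 R (KN S (delta n)) = 4 * dot2 (ricci R) S := by
  rw [dot4_KN hR]
  simp only [delta, mul_ite, mul_one, mul_zero, sum_ite_eq, mem_univ, if_true, dot2, ricci,
    sum_mul]
  congr 1
  exact sum_congr rfl fun i _ => sum_comm

lemma ricci_eq_zero {R : Fin n → Fin n → Fin n → Fin n → ℝ} (hR : PairAntisymm R)
    (htr : ∀ j l, ∑ i, R i j i l = 0) : ricci R = 0 := by
  ext i k
  show ∑ j, R i j k j = 0
  rw [← htr i k]
  exact sum_congr rfl fun j _ => by rw [hR.left, hR.right, neg_neg]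

@[simp] lemma ricci_sub (R Q : Fin n → Fin n → Fin n → Fin n → ℝ) :
    ricci (R - Q) = ricci R - ricci Q := by
  ext i k; simp only [ricci, Pi.sub_apply, sum_sub_distrib]

@[simp] lemma ricci_smul (c : ℝ) (R : Fin n → Fin n → Fin n → Fin n → ℝ) :
    ricci (c • R) = c • ricci R := by
  ext i k; simp only [ricci, Pi.smul_apply, smul_eq_mul, mul_sum]

lemma ricci_KN_delta (S : Fin n → Fin n → ℝ) :
    ricci (KN S (delta n)) = ((n : ℝ) - 2) • S + (∑ i, S i i) • delta n := by
  ext i k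
  simp only [ricci, KN, delta, Pi.add_apply, Pi.smul_apply, smul_eq_mul, mul_ite, mul_one,
    mul_zero, sum_add_distrib, sum_sub_distrib, sum_ite_eq, sum_ite_eq', mem_univ, ↓reduceIte,
    sum_const, card_univ, Fintype.card_fin, nsmul_eq_mul, sum_ite_irrel]
  ring

@[simp] lemma dot2_ricci_delta (R : Fin n → Fin n → Fin n → Fin n → ℝ) :
    dot2 (ricci R) (delta n) = scal R :=
  dot2_delta_right _

lemma dot2_tracelessRicci_self (hn : n ≠ 0) (R : Fin n → Fin n → Fin n → Fin n → ℝ) :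
    dot2 (tracelessRicci R) (tracelessRicci R) = dot2 (ricci R) (ricci R) - scal R ^ 2 / n := by
  have hn' : (n : ℝ) ≠ 0 := by exact_mod_cast hn
  simp only [tracelessRicci, dot2_sub_left, dot2_sub_right, dot2_smul_left, dot2_smul_right,
    dot2_delta_delta, dot2_comm (delta n), dot2_ricci_delta]
  field_simp
  ring

lemma ricci_weylPart (hn : 2 < n) (R : Fin n → Fin n → Fin n → Fin n → ℝ) :
    ricci (weylPart R) = 0 := by
  have hn' : (2 : ℝ) < n := by exact_mod_cast hn
  have h₂ : (n : ℝ) - 2 ≠ 0 := by linarith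
  have h₁ : (n : ℝ) - 1 ≠ 0 := by linarith
  ext i k
  simp only [weylPart, tracelessRicci, scal, ricci_sub, ricci_smul, ricci_KN_delta,
    Pi.sub_apply, Pi.smul_apply, Pi.add_apply, Pi.zero_apply, delta, ↓reduceIte, smul_eq_mul,
    mul_one, sum_sub_distrib, sum_const, card_univ, Fintype.card_fin, nsmul_eq_mul, smul_add,
    mul_ite, mul_zero]
  split_ifs <;> field_simp <;> ring

lemma dot4_weylPart_right {W : Fin n → Fin n → Fin n → Fin n → ℝ} (hW : PairAntisymm W)
    (hric : ricci W = 0) (R : Fin n → Fin n → Fin n → Fin n → ℝ) :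
    dot4 W (weylPart R) = dot4 W R := by
  have hperp : ∀ S, dot4 W (KN S (delta n)) = 0 := fun S => by
    simp [dot4_KN_delta hW, hric, dot2]
  simp only [weylPart, dot4_sub_right, dot4_smul_right, hperp, mul_zero, sub_zero]

lemma PairAntisymm.weylPart {R : Fin n → Fin n → Fin n → Fin n → ℝ} (hR : PairAntisymm R) :
    PairAntisymm (weylPart R) :=
  (hR.sub ((pairAntisymm_KN _ _).smul _)).sub ((pairAntisymm_KN _ _).smul _)

lemma dot4_weylPart_self (hn : 2 < n) {R : Fin n → Fin n → Fin n → Fin n → ℝ}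
    (hR : PairAntisymm R) :
    dot4 (weylPart R) (weylPart R) = dot4 R R - 4 / ((n : ℝ) - 2) *
      dot2 (tracelessRicci R) (tracelessRicci R) - 2 * scal R ^ 2 / (n * ((n : ℝ) - 1)) := by
  rw [dot4_weylPart_right hR.weylPart (ricci_weylPart hn R), dot4_comm,
    dot2_tracelessRicci_self (by omega)]
  simp only [weylPart, tracelessRicci, dot4_sub_right, dot4_smul_right, dot4_KN_delta hR,
    dot2_sub_right, dot2_smul_right, dot2_ricci_delta]
  field_simp
  ring

def msq (B : Fin n → Fin n → ℝ) : Fin n → Fin n → ℝ := fun i k => ∑ j, B i j * B j k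

lemma trace_msq {B : Fin n → Fin n → ℝ} (hB : ∀ i j, B i j = B j i) :
    ∑ i, msq B i i = dot2 B B :=
  sum_congr rfl fun i _ => sum_congr rfl fun j _ => by rw [hB j i]

lemma ricci_KN_self (B : Fin n → Fin n → ℝ) :
    ricci (KN B B) = (2 * ∑ i, B i i) • B - (2 : ℝ) • msq B := by
  ext i k
  simp only [ricci, KN, msq, Pi.sub_apply, Pi.smul_apply, smul_eq_mul]
  simp only [sum_add_distrib, sum_sub_distrib, ← sum_mul, ← mul_sum, mul_comm (B _ k) (B i _)]
  ring

lemma dot4_KN_self_self {B : Fin n → Fin n → ℝ} (hB : ∀ i j, B i j = B j i) :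
    dot4 (KN B B) (KN B B) = 8 * (dot2 B B ^ 2 - dot2 (msq B) (msq B)) := by
  have hsq : ∑ i, ∑ j, ∑ k, ∑ l, (B i k * B i k) * (B j l * B j l) = dot2 B B ^ 2 := by
    simp only [dot2, sq, sum_mul_sum]
  have hmsq : ∑ i, ∑ j, ∑ k, ∑ l, (B i k * B i l) * (B j k * B j l) =
      dot2 (msq B) (msq B) := by
    simp only [dot2, msq, sum_mul_sum]
    calc _ = ∑ i, ∑ k, ∑ l, ∑ j, (B i k * B i l) * (B j k * B j l) :=
          sum_congr rfl fun i _ => by rw [sum_comm]; exact sum_congr rfl fun k _ => sum_comm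
      _ = _ := by
          rw [sum_comm]
          refine sum_congr rfl fun k _ => ?_
          rw [sum_comm]
          simp only [hB _ k]
  have hpt : ∀ i j k l, KN B B i j k l * (B i k * B j l) =
      2 * ((B i k * B i k) * (B j l * B j l) - (B i k * B i l) * (B j k * B j l)) := by
    intro i j k l; simp only [KN]; ring
  rw [dot4_KN (pairAntisymm_KN B B)]
  simp only [hpt, ← mul_sum]
  simp only [sum_sub_distrib, hsq, hmsq]
  ring

lemma dot4_weylPart_KN_self_add (hn : 2 < n) {B : Fin n → Fin n → ℝ}
    (hB : ∀ i j, B i j = B j i) (htr : ∑ i, B i i = 0) :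
    dot4 (weylPart (KN B B)) (weylPart (KN B B)) + 2 * n / ((n : ℝ) - 2) *
        dot2 (tracelessRicci (KN B B)) (tracelessRicci (KN B B)) =
      8 * ((n : ℝ) - 2) / ((n : ℝ) - 1) * dot2 B B ^ 2 := by
  have hn' : (2 : ℝ) < n := by exact_mod_cast hn
  have h₂ : (n : ℝ) - 2 ≠ 0 := by linarith
  have h₁ : (n : ℝ) - 1 ≠ 0 := by linarith
  have hric : ricci (KN B B) = (-2 : ℝ) • msq B := by
    rw [ricci_KN_self, htr, mul_zero, zero_smul, zero_sub, neg_smul]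
  have hscal : scal (KN B B) = -2 * dot2 B B := by
    simp only [scal, hric, Pi.smul_apply, smul_eq_mul, ← mul_sum, trace_msq hB]
  rw [dot4_weylPart_self hn (pairAntisymm_KN B B), dot4_KN_self_self hB,
    dot2_tracelessRicci_self (by omega), hric, hscal, dot2_smul_left, dot2_smul_right]
  field_simp
  ring

end

theorem key_cauchy_schwarz_estimate_general (n : ℕ) (hn : 3 ≤ n)
    (W : Fin n → Fin n → Fin n → Fin n → ℝ)
    (hanti1 : ∀ i j k l, W i j k l = -W j i k l)
    (hanti2 : ∀ i j k l, W i j k l = -W i j l k)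
    (htrfree : ∀ j l, ∑ i, W i j i l = 0)
    (B : Fin n → Fin n → ℝ)
    (hBsymm : ∀ i j, B i j = B j i)
    (hBtr : ∑ i, B i i = 0) :
    (∑ i, ∑ j, ∑ k, ∑ l,
        (W i j k l + ((n : ℝ) / (2 * ((n : ℝ) - 2))) * KN B (delta n) i j k l) *
          KN B B i j k l) ^ 2 ≤
      (8 * ((n : ℝ) - 2) / ((n : ℝ) - 1)) *
        ((∑ i, ∑ j, ∑ k, ∑ l, W i j k l ^ 2) +
          (2 * (n : ℝ) / ((n : ℝ) - 2)) * ∑ i, ∑ j, B i j ^ 2) *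
        (∑ i, ∑ j, B i j ^ 2) ^ 2 := by
  have hn' : (2 : ℝ) < n := by exact_mod_cast hn
  have hW : PairAntisymm W := ⟨hanti1, hanti2⟩
  set s := 2 * (n : ℝ) / ((n : ℝ) - 2)
  have hs : 0 ≤ s := by positivity
  have hlhs : dot4 (W + ((n : ℝ) / (2 * ((n : ℝ) - 2))) • KN B (delta n)) (KN B B) =
      dot4 W (weylPart (KN B B)) + s * dot2 B (tracelessRicci (KN B B)) := by
    rw [dot4_add_left, dot4_smul_left, dot4_comm (KN B _), dot4_KN_delta (pairAntisymm_KN B B),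
      dot4_weylPart_right hW (ricci_eq_zero hW htrfree), tracelessRicci, dot2_sub_right,
      dot2_smul_right, dot2_delta_right, hBtr, dot2_comm]
    field_simp
    ring
  calc _ = (dot4 W (weylPart (KN B B)) + s * dot2 B (tracelessRicci (KN B B))) ^ 2 := by
        rw [← hlhs]; rfl
    _ ≤ (dot4 W W + s * dot2 B B) * (dot4 (weylPart (KN B B)) (weylPart (KN B B)) +
          s * dot2 (tracelessRicci (KN B B)) (tracelessRicci (KN B B))) :=
        dot4_add_smul_dot2_sq_le hs _ _ _ _
    _ = _ := by
      rw [dot4_weylPart_KN_self_add (by omega) hBsymm hBtr]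
      simp only [dot4, dot2, sq]
      ring

theorem key_cauchy_schwarz_estimate (n : ℕ) (hn : 3 ≤ n)
    (W : Fin n → Fin n → Fin n → Fin n → ℝ)
    (hanti1 : ∀ i j k l, W i j k l = -W j i k l)
    (hanti2 : ∀ i j k l, W i j k l = -W i j l k)
    (hpair : ∀ i j k l, W i j k l = W k l i j)
    (hbianchi : ∀ i j k l, W i j k l + W i k l j + W i l j k = 0)
    (htrfree : ∀ j l, ∑ i, W i j i l = 0)
    (B : Fin n → Fin n → ℝ)
    (hBsymm : ∀ i j, B i j = B j i)
    (hBtr : ∑ i, B i i = 0) :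
    (∑ i, ∑ j, ∑ k, ∑ l,
        (W i j k l + ((n : ℝ) / (2 * ((n : ℝ) - 2))) * KN B (delta n) i j k l) *
          KN B B i j k l) ^ 2 ≤
      (8 * ((n : ℝ) - 2) / ((n : ℝ) - 1)) *
        ((∑ i, ∑ j, ∑ k, ∑ l, W i j k l ^ 2) +
          (2 * (n : ℝ) / ((n : ℝ) - 2)) * ∑ i, ∑ j, B i j ^ 2) *
        (∑ i, ∑ j, B i j ^ 2) ^ 2 :=
  key_cauchy_schwarz_estimate_general n hn W hanti1 hanti2 htrfree B hBsymm hBtr
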